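/- arXiv:2306.07633 — 6 statements merged into one kernel-verified Lean document; each statement's English description precedes it below -/
import Mathlib

section
/- Let G be a finite group, N a normal subgroup of G, and g_1, …, g_d elements of G such that G = ⟨g_1, …, g_d⟩N (i.e. the images g_1N, …, g_dN generate G/N). If G can be generated by d elements (i.e. d(G) ≤ d), then there exist u_1, …, u_d ∈ N such that G = ⟨g_1u_1, …, g_du_d⟩. -/
/-!
For a subgroup `H`, count the tuples `u ∈ Nᵈ` with `⟨g * u⟩ = H`. Summed over all `K ≤ H` this
counts the `u ∈ Nᵈ` with every `gᵢ uᵢ ∈ H`, which is `|N ⊓ H|ᵈ` if `H ⊔ N = ⊤` and `0` otherwise: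
a number independent of `g`. Möbius inversion over the subgroup lattice therefore makes each count
independent of `g` among tuples generating `G` modulo `N`. For a generating `d`-tuple, which exists
because `d(G) ≤ d`, the count for `H = ⊤` is positive (take `u = 1`), hence it is positive for `g`.
-/

open Subgroup Finset

theorem eq_of_forall_sum_filter_le_eq {α M : Type*} [PartialOrder α] [Fintype α]
    [DecidableLE α] [AddCancelCommMonoid M] {f f' : α → M}
    (h : ∀ a, ∑ b with b ≤ a, f b = ∑ b with b ≤ a, f' b) : f = f' := by
  classical
  funext a
  induction a using WellFoundedLT.induction with
  | ind a ih =>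
    have hsplit : univ.filter (· ≤ a) = insert a (univ.filter (· < a)) := by
      ext b; simp [le_iff_lt_or_eq, or_comm]
    have hlt : ∑ b with b < a, f b = ∑ b with b < a, f' b :=
      sum_congr rfl fun b hb => ih b (mem_filter.mp hb).2
    have := h a
    rw [hsplit, sum_insert (by simp), sum_insert (by simp), hlt] at this
    exact add_right_cancel this

section

variable {G : Type*} [Group G]

theorem exists_fin_closure_range_eq_top [Group.FG G] {d : ℕ} (hd : Group.rank G ≤ d) :
    ∃ g : Fin d → G, closure (Set.range g) = ⊤ := by
  obtain ⟨S, hS, hSgen⟩ := Group.rank_spec G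
  refine ⟨fun i => S.toList.getD i 1, top_unique (hSgen ▸ (closure_le _).mpr ?_)⟩
  intro x hx
  obtain ⟨j, hj, rfl⟩ := List.mem_iff_getElem.mp (mem_toList.mpr hx)
  exact subset_closure ⟨⟨j, by simp at hj; omega⟩, List.getD_eq_getElem _ _ hj⟩

variable [Fintype G]

theorem card_filter_mem_and_mul_mem {A B : Subgroup G} [DecidablePred (· ∈ A)]
    [DecidablePred (· ∈ B)] {g x₀ : G} (hx₀ : x₀ ∈ A) (hgx₀ : g * x₀ ∈ B) :
    #{x | x ∈ A ∧ g * x ∈ B} = Nat.card (A ⊓ B : Subgroup G) := by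
  rw [← Fintype.card_subtype, ← Nat.card_eq_fintype_card]
  -- the set is the left coset `x₀ (A ⊓ B)`
  refine Nat.card_congr (Equiv.subtypeEquiv (Equiv.mulLeft x₀⁻¹) fun x => ?_)
  have hx : g * x = g * x₀ * (x₀⁻¹ * x) := by group
  rw [Equiv.coe_mulLeft, Subgroup.mem_inf, A.mul_mem_cancel_left (inv_mem hx₀), hx,
    B.mul_mem_cancel_left hgx₀]

theorem card_filter_forall_mul_mem [DecidableEq G] (N H : Subgroup G) [N.Normal]
    [DecidablePred (· ∈ N)] [DecidablePred (· ∈ H)] {d : ℕ} (g : Fin d → G) (hH : H ⊔ N = ⊤) :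
    #{u : Fin d → G | (∀ i, u i ∈ N) ∧ ∀ i, g i * u i ∈ H} = Nat.card (N ⊓ H : Subgroup G) ^ d := by
  have hfiber (i : Fin d) : #{x | x ∈ N ∧ g i * x ∈ H} = Nat.card (N ⊓ H : Subgroup G) := by
    obtain ⟨h, hh, n, hn, hhn⟩ := mem_sup_of_normal_right.mp (hH ▸ mem_top (g i))
    exact card_filter_mem_and_mul_mem (inv_mem hn) (by rwa [← hhn, mul_inv_cancel_right])
  have hpi : ({u : Fin d → G | (∀ i, u i ∈ N) ∧ ∀ i, g i * u i ∈ H} : Finset _) =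
      Fintype.piFinset fun i => {x | x ∈ N ∧ g i * x ∈ H} := by
    ext u; simp [forall_and]
  rw [hpi, Fintype.card_piFinset, prod_congr rfl fun i _ => hfiber i, prod_const, card_univ,
    Fintype.card_fin]

end

section LiftCount

open scoped Classical

variable {G : Type*} [Group G] [Fintype G] (N : Subgroup G) {d : ℕ}

noncomputable def liftCount (g : Fin d → G) (H : Subgroup G) : ℕ :=
  #{u : Fin d → G | (∀ i, u i ∈ N) ∧ closure (Set.range (g * u)) = H}

theorem liftCount_ne_zero_iff {g : Fin d → G} {H : Subgroup G} :
    liftCount N g H ≠ 0 ↔ ∃ u : Fin d → G, (∀ i, u i ∈ N) ∧ closure (Set.range (g * u)) = H := by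
  simp [liftCount]

theorem sum_liftCount_le (g : Fin d → G) (H : Subgroup G) :
    ∑ K with K ≤ H, liftCount N g K =
      #{u : Fin d → G | (∀ i, u i ∈ N) ∧ ∀ i, g i * u i ∈ H} := by
  rw [card_eq_sum_card_fiberwise (f := fun u => Subgroup.closure (Set.range (g * u)))
    (t := univ.filter (· ≤ H))]
  · refine sum_congr rfl fun K hK => congrArg card (Finset.ext fun u => ?_)
    simp only [mem_filter, mem_univ, true_and] at hK ⊢
    constructor
    · rintro ⟨hu, rfl⟩
      exact ⟨⟨hu, fun i => hK (subset_closure ⟨i, rfl⟩)⟩, rfl⟩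
    · rintro ⟨⟨hu, -⟩, rfl⟩
      exact ⟨hu, rfl⟩
  · intro u hu
    simp only [coe_filter, mem_univ, true_and, Set.mem_ofPred_eq] at hu ⊢
    exact (closure_le H).mpr (Set.range_subset_iff.mpr hu.2)

theorem card_filter_forall_mul_mem_of_sup_ne_top {g : Fin d → G}
    (hg : closure (Set.range g) ⊔ N = ⊤) {H : Subgroup G} (hH : H ⊔ N ≠ ⊤) :
    #{u : Fin d → G | (∀ i, u i ∈ N) ∧ ∀ i, g i * u i ∈ H} = 0 := by
  refine card_eq_zero.mpr (filter_eq_empty_iff.mpr fun u _ ⟨hu, hgu⟩ => hH (top_unique ?_))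
  refine hg ▸ sup_le ((closure_le _).mpr ?_) le_sup_right
  rintro _ ⟨i, rfl⟩
  simpa using mul_mem (mem_sup_left (hgu i)) (mem_sup_right (inv_mem (hu i)) : (u i)⁻¹ ∈ H ⊔ N)

theorem liftCount_eq [N.Normal] {g g' : Fin d → G} (hg : closure (Set.range g) ⊔ N = ⊤)
    (hg' : closure (Set.range g') ⊔ N = ⊤) : liftCount N g = liftCount N g' := by
  refine eq_of_forall_sum_filter_le_eq fun H => ?_
  rw [sum_liftCount_le, sum_liftCount_le]
  by_cases hH : H ⊔ N = ⊤
  · rw [card_filter_forall_mul_mem N H g hH, card_filter_forall_mul_mem N H g' hH]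
  · rw [card_filter_forall_mul_mem_of_sup_ne_top N hg hH,
      card_filter_forall_mul_mem_of_sup_ne_top N hg' hH]

end LiftCount

/-- **Gaschütz's lemma.** Let `G` be a finite group, `N` a normal subgroup of `G`, and
`g 1, …, g d` elements of `G` generating `G` modulo `N`. If `G` can be generated by `d`
elements, then there exist `u 1, …, u d ∈ N` such that `G = ⟨g 1 * u 1, …, g d * u d⟩`. -/
theorem gaschutz_lemma {G : Type*} [Group G] [Finite G]
    (N : Subgroup G) (hN : N.Normal) (d : ℕ) (g : Fin d → G)
    (hgen : Subgroup.closure (Set.range g) ⊔ N = ⊤)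
    (hrank : Group.rank G ≤ d) :
    ∃ u : Fin d → G, (∀ i, u i ∈ N) ∧
      Subgroup.closure (Set.range fun i => g i * u i) = ⊤ := by
  have := Fintype.ofFinite G
  obtain ⟨h, hh⟩ := exists_fin_closure_range_eq_top hrank
  have hlift : liftCount N h ⊤ ≠ 0 :=
    (liftCount_ne_zero_iff N).mpr ⟨1, fun _ => one_mem N, by rwa [mul_one]⟩
  rw [← liftCount_eq N hgen (by rw [hh, top_sup_eq])] at hlift
  exact (liftCount_ne_zero_iff N).mp hlift
end

section
/- Let G be a nontrivial finite group and let H/K be an abelian chief factor of G. Then H/K is non-Frattini (i.e. the image of H in G/K is not contained in Frat(G/K)) if and only if H/K is complemented (i.e. there exists a subgroup U of G with UH = G and U ∩ H = K). -/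
/-!
If `H/K` is not Frattini, some maximal subgroup `U ⊇ K` of `G` misses `H`, so `U ⊔ H = G`.
Because `H/K` is abelian, `U ∩ H` is normalised by `H` as well as by `U`, hence is normal in
`U ⊔ H = G`; it lies between `K` and `H` but is not `H`, so minimality forces `U ∩ H = K`.
Conversely, if `U` complements `H/K` and `H/K` were Frattini, the image of `U` would generate
`G/K` together with the Frattini subgroup, forcing `U = G` and hence `H = U ∩ H = K`.
-/

namespace Subgroup

variable {G : Type*} [Group G]

theorem exists_isCoatom_not_le_of_not_le_frattini {A : Subgroup G} (h : ¬ A ≤ frattini G) :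
    ∃ M : Subgroup G, IsCoatom M ∧ ¬ A ≤ M := by
  contrapose! h
  exact le_iInf₂ h

theorem normal_inf_of_sup_eq_top {U N : Subgroup G} [hN : N.Normal] (hcomm : ⁅N, N⁆ ≤ U)
    (hsup : U ⊔ N = ⊤) : (U ⊓ N).Normal where
  conj_mem x hx g := by
    obtain ⟨u, hu, n, hn, rfl⟩ := mem_sup_of_normal_right.mp (hsup ▸ mem_top g)
    have hconj : n * x * n⁻¹ ∈ U ⊓ N := by
      have hcx : n * x * n⁻¹ * x⁻¹ ∈ U ⊓ N := ⟨commutator_le.mp hcomm n hn x hx.2,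
        N.mul_mem (hN.conj_mem x hx.2 n) (N.inv_mem hx.2)⟩
      simpa using (U ⊓ N).mul_mem hcx hx
    have hu_conj : u * (n * x * n⁻¹) * u⁻¹ ∈ U ⊓ N :=
      ⟨U.mul_mem (U.mul_mem hu hconj.1) (U.inv_mem hu), hN.conj_mem _ hconj.2 u⟩
    simpa [mul_assoc] using hu_conj

theorem eq_top_of_sup_eq_top_of_map_le_frattini {Q : Type*} [Group Q]
    [IsCoatomic (Subgroup Q)] {f : G →* Q} (hf : Function.Surjective f) {U A : Subgroup G}
    (hker : f.ker ≤ U) (hsup : U ⊔ A = ⊤) (hA : A.map f ≤ frattini Q) : U = ⊤ := by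
  have hmap : U.map f = ⊤ := by
    refine frattini_nongenerating (top_le_iff.mp ?_)
    calc ⊤ = (U ⊔ A).map f := by rw [hsup, map_top_of_surjective f hf]
      _ = U.map f ⊔ A.map f := map_sup U A f
      _ ≤ U.map f ⊔ frattini Q := sup_le_sup_left hA _
  rw [← comap_map_eq_self hker, hmap, comap_top]

end Subgroup

theorem abelian_chief_factor_nonFrattini_iff_complemented_general
    {G : Type*} [Group G] [Finite G]
    (H K : Subgroup G) (hHnormal : H.Normal) (hKnormal : K.Normal)
    (hKH : K < H)
    (hchief : ∀ M : Subgroup G, M.Normal → K ≤ M → M ≤ H → M = K ∨ M = H)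
    (habelian : ∀ a ∈ H, ∀ b ∈ H, a * b * a⁻¹ * b⁻¹ ∈ K) :
    ¬ (H.map (QuotientGroup.mk' K) ≤ frattini (G ⧸ K)) ↔
      ∃ U : Subgroup G, U ⊔ H = ⊤ ∧ U ⊓ H = K := by
  have hcomm : ⁅H, H⁆ ≤ K := Subgroup.commutator_le.mpr habelian
  have hπ := QuotientGroup.mk'_surjective K
  constructor
  · intro hH
    obtain ⟨M, hM, hHM⟩ := Subgroup.exists_isCoatom_not_le_of_not_le_frattini hH
    set U := M.comap (QuotientGroup.mk' K)
    have hU : IsCoatom U := Subgroup.isCoatom_comap_of_surjective hπ hM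
    have hHU : ¬ H ≤ U := fun h ↦ hHM (Subgroup.map_le_iff_le_comap.mpr h)
    have hKU : K ≤ U := by simpa using M.ker_le_comap (QuotientGroup.mk' K)
    have hsup : U ⊔ H = ⊤ := codisjoint_iff.mp (hU.not_le_iff_codisjoint.mp hHU)
    have hnormal := Subgroup.normal_inf_of_sup_eq_top (hcomm.trans hKU) hsup
    refine ⟨U, hsup, ?_⟩
    exact (hchief _ hnormal (le_inf hKU hKH.le) inf_le_right).resolve_right
      fun h ↦ hHU (inf_eq_right.mp h)
  · rintro ⟨U, hsup, hinf⟩ hH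
    have hKU : K ≤ U := hinf ▸ inf_le_left
    have hUtop :=
      Subgroup.eq_top_of_sup_eq_top_of_map_le_frattini hπ (by simpa using hKU) hsup hH
    rw [hUtop, top_inf_eq] at hinf
    exact hKH.ne' hinf

/-- Let `G` be a nontrivial finite group and let `H/K` be an abelian chief factor of `G`.
Then `H/K` is non-Frattini (the image of `H` in `G/K` is not contained in `Frat(G/K)`)
if and only if `H/K` is complemented (there is a subgroup `U` of `G` with `UH = G` and
`U ∩ H = K`). -/
theorem abelian_chief_factor_nonFrattini_iff_complemented
    {G : Type*} [Group G] [Finite G] (hG : Nontrivial G)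
    (H K : Subgroup G) (hHnormal : H.Normal) (hKnormal : K.Normal)
    (hKH : K < H)
    (hchief : ∀ M : Subgroup G, M.Normal → K ≤ M → M ≤ H → M = K ∨ M = H)
    (habelian : ∀ a ∈ H, ∀ b ∈ H, a * b * a⁻¹ * b⁻¹ ∈ K) :
    ¬ (H.map (QuotientGroup.mk' K) ≤ frattini (G ⧸ K)) ↔
      ∃ U : Subgroup G, U ⊔ H = ⊤ ∧ U ⊓ H = K :=
  abelian_chief_factor_nonFrattini_iff_complemented_general H K hHnormal hKnormal hKH hchief
    habelian
end

section
/- Let G be a finite group and let N = ⟨e_1, …, e_l⟩ be an abelian minimal normal subgroup of G. If G = ⟨g_1, …, g_d⟩N then one of the following occurs: (1) d(G) ≤ d and either G = ⟨g_1, …, g_d⟩ or there exist 1 ≤ i ≤ d and 1 ≤ j ≤ l such that G = ⟨g_1, …, g_{i-1}, g_ie_j, g_{i+1}, …, g_d⟩; (2) d(G) = d + 1 and G = ⟨g_1, …, g_d, x⟩ for every x ∈ N with x ≠ 1. -/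
/-!
Call an endomorphism `s` of `G` a section of `N` if it kills `N` and maps every coset `xN` into
itself; these are the projections of `G` onto the complements of `N`. A section is determined by
its offsets `(y i)⁻¹ * s (y i) ∈ N` along any family `y` generating `G` modulo `N`, so a
`d`-tuple gives at most `|N| ^ d` sections. Since `N` is abelian and minimal normal, a supplement
of `N` is either `G` or a complement. If neither `⟨g⟩` nor any `⟨g_1, …, g_i e_j, …, g_d⟩` is
`G`, all of them are complements, so the offsets `1` and `e_j` in coordinate `i` are realised
along `g`. As `x ↦ s x * (t x)⁻¹ * r x` is again a section, the realised offsets form a subgroup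
of `N ^ d`, hence all of it, and there are `|N| ^ d` sections. Along a generating `d`-tuple the
offset `1` would force `s = id`, which does not kill `N`, so fewer offsets are realised and
`d(G) > d`. Finally `⟨g, x⟩` with `1 ≠ x ∈ N` is a supplement meeting `N`, hence is `G`.
-/

open Subgroup Set

section

variable {G : Type*} [Group G] {N K : Subgroup G} {ι : Type*}

theorem Subgroup.normal_inf_of_sup_eq_top_s5 (hN : N.Normal)
    (hNcomm : ∀ a ∈ N, ∀ b ∈ N, a * b = b * a) (hKN : K ⊔ N = ⊤) : (K ⊓ N).Normal := by
  rw [← normalizer_eq_top_iff, eq_top_iff, ← hKN]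
  have hN_centralizes : N ≤ centralizer (K ⊓ N : Subgroup G) := fun n hn =>
    mem_centralizer_iff.mpr fun m hm => hNcomm m hm.2 n hn
  exact sup_le ((le_inf le_normalizer le_normalizer_of_normal).trans
    inf_normalizer_le_normalizer_inf) (hN_centralizes.trans (centralizer_le_normalizer _))

theorem Subgroup.isComplement'_of_sup_eq_top_of_inf_eq_bot [N.Normal] (hsup : K ⊔ N = ⊤)
    (hinf : K ⊓ N = ⊥) : K.IsComplement' N :=
  isComplement'_of_disjoint_and_mul_eq_univ (disjoint_iff.mpr hinf) <| by
    rw [← mul_normal, hsup, coe_top]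

theorem Subgroup.eq_top_or_isComplement'_of_sup_eq_top (hN : N.Normal)
    (hNmin : ∀ M : Subgroup G, M.Normal → M ≤ N → M = ⊥ ∨ M = N)
    (hNcomm : ∀ a ∈ N, ∀ b ∈ N, a * b = b * a) (hKN : K ⊔ N = ⊤) :
    K = ⊤ ∨ K.IsComplement' N := by
  rcases hNmin _ (normal_inf_of_sup_eq_top_s5 hN hNcomm hKN) inf_le_right with hinf | hinf
  · exact .inr (isComplement'_of_sup_eq_top_of_inf_eq_bot hKN hinf)
  · rw [← hKN, sup_eq_left.mpr (inf_eq_right.mp hinf)]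
    exact .inl rfl

theorem Subgroup.eq_top_of_sup_eq_top_of_mem (hN : N.Normal)
    (hNmin : ∀ M : Subgroup G, M.Normal → M ≤ N → M = ⊥ ∨ M = N)
    (hNcomm : ∀ a ∈ N, ∀ b ∈ N, a * b = b * a) (hKN : K ⊔ N = ⊤) {x : G} (hxK : x ∈ K)
    (hxN : x ∈ N) (hx1 : x ≠ 1) : K = ⊤ :=
  (eq_top_or_isComplement'_of_sup_eq_top hN hNmin hNcomm hKN).resolve_right fun hK =>
    hx1 <| mem_bot.mp <| hK.disjoint.le_bot ⟨hxK, hxN⟩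

theorem Group.rank_le_of_closure_range_eq_top [Group.FG G] [Fintype ι] {y : ι → G}
    (hy : Subgroup.closure (range y) = ⊤) : Group.rank G ≤ Fintype.card ι := by
  classical
  calc Group.rank G ≤ (Finset.univ.image y).card := Group.rank_le (by simpa using hy)
    _ ≤ Fintype.card ι := Finset.card_image_le

theorem Group.exists_closure_range_eq_top_of_rank_le [Group.FG G] {n : ℕ}
    (h : Group.rank G ≤ n) : ∃ y : Fin n → G, Subgroup.closure (range y) = ⊤ := by
  obtain ⟨S, hcard, hS⟩ := Group.rank_spec G
  let f : Fin (Group.rank G) → G := fun i => S.equivFin.symm (Fin.cast hcard.symm i)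
  refine ⟨Function.extend (Fin.castLE h) f 1, top_unique (hS ▸ Subgroup.closure_mono ?_)⟩
  intro x hx
  refine ⟨Fin.castLE h (Fin.cast hcard (S.equivFin ⟨x, hx⟩)), ?_⟩
  rw [(Fin.castLE_injective h).extend_apply]
  simp [f]

structure IsSection (N : Subgroup G) (s : G →* G) : Prop where
  inv_mul_mem : ∀ x, x⁻¹ * s x ∈ N
  map_eq_one : ∀ n ∈ N, s n = 1

namespace IsSection

theorem exists_of_isComplement' [N.Normal] (hK : K.IsComplement' N) :
    ∃ s : G →* G, IsSection N s ∧ ∀ k ∈ K, s k = k := by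
  let σ : G →* G := K.subtype.comp (hK.QuotientMulEquiv.toMonoidHom.comp (QuotientGroup.mk' N))
  have hσ : ∀ x : G, ((σ x : G) : G ⧸ N) = x := fun x =>
    hK.quotientGroupMk_leftQuotientEquiv (x : G ⧸ N)
  refine ⟨σ, ⟨fun x => QuotientGroup.eq.mp (hσ x).symm, fun n hn => ?_⟩, fun k hk => ?_⟩
  · change K.subtype (hK.QuotientMulEquiv (QuotientGroup.mk' N n)) = 1
    rw [QuotientGroup.mk'_apply, (QuotientGroup.eq_one_iff n).mpr hn, map_one, map_one]
  · have hk' : hK.QuotientMulEquiv.symm ⟨k, hk⟩ = (k : G ⧸ N) := rfl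
    change ((hK.QuotientMulEquiv (k : G ⧸ N) : K) : G) = k
    rw [← hk', MulEquiv.apply_symm_apply]

theorem inv_mul_mem_of {s t : G →* G} (hs : IsSection N s) (ht : IsSection N t) (x : G) :
    (s x)⁻¹ * t x ∈ N := by
  simpa [mul_assoc] using N.mul_mem (N.inv_mem (hs.inv_mul_mem x)) (ht.inv_mul_mem x)

theorem exists_mul_inv_mul (hN : N.Normal) (hNcomm : ∀ a ∈ N, ∀ b ∈ N, a * b = b * a)
    {s t r : G →* G} (hs : IsSection N s) (ht : IsSection N t) (hr : IsSection N r) :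
    ∃ F : G →* G, IsSection N F ∧ ∀ x, F x = s x * (t x)⁻¹ * r x := by
  have hmap_mul : ∀ a b : G, s (a * b) * (t (a * b))⁻¹ * r (a * b) =
      s a * (t a)⁻¹ * r a * (s b * (t b)⁻¹ * r b) := fun a b => calc
    _ = s a * ((s b * (t b)⁻¹) * ((t a)⁻¹ * r a)) * r b := by simp only [map_mul]; group
    _ = s a * (((t a)⁻¹ * r a) * (s b * (t b)⁻¹)) * r b := by
      rw [hNcomm _ (hN.mem_comm (ht.inv_mul_mem_of hs b)) _ (ht.inv_mul_mem_of hr a)]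
    _ = _ := by group
  refine ⟨.mk' (fun x => s x * (t x)⁻¹ * r x) hmap_mul, ⟨fun x => ?_, fun n hn => ?_⟩,
    fun _ => rfl⟩
  · have h : x⁻¹ * (s x * (t x)⁻¹ * r x) = x⁻¹ * s x * (x⁻¹ * t x)⁻¹ * (x⁻¹ * r x) := by group
    exact h ▸ N.mul_mem (N.mul_mem (hs.inv_mul_mem x) (N.inv_mem (ht.inv_mul_mem x)))
      (hr.inv_mul_mem x)
  · simp [hs.map_eq_one n hn, ht.map_eq_one n hn, hr.map_eq_one n hn]

end IsSection

def realizedOffsets (N : Subgroup G) (y : ι → G) : Set (ι → G) :=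
  {ν | ∃ s : G →* G, IsSection N s ∧ ∀ i, (y i)⁻¹ * s (y i) = ν i}

def sectionOffsets (N : Subgroup G) (y : ι → G) (s : {s : G →* G // IsSection N s}) : ι → N :=
  fun i => ⟨(y i)⁻¹ * s.1 (y i), s.2.inv_mul_mem (y i)⟩

theorem closure_range_mul_sup {y ν : ι → G} (hν : ∀ i, ν i ∈ N) :
    Subgroup.closure (range (y * ν)) ⊔ N = Subgroup.closure (range y) ⊔ N := by
  have key : ∀ (y ν : ι → G), (∀ i, ν i ∈ N) →
      Subgroup.closure (range (y * ν)) ⊔ N ≤ Subgroup.closure (range y) ⊔ N := fun y ν hν =>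
    sup_le ((closure_le _).mpr <| range_subset_iff.mpr fun i =>
      mul_mem_sup (subset_closure (mem_range_self i)) (hν i)) le_sup_right
  refine le_antisymm (key y ν hν) ?_
  simpa using key (y * ν) ν⁻¹ fun i => N.inv_mem (hν i)

theorem mul_inv_mul_mem_realizedOffsets (hN : N.Normal)
    (hNcomm : ∀ a ∈ N, ∀ b ∈ N, a * b = b * a) {y ν μ ρ : ι → G}
    (hν : ν ∈ realizedOffsets N y) (hμ : μ ∈ realizedOffsets N y)
    (hρ : ρ ∈ realizedOffsets N y) : ν * μ⁻¹ * ρ ∈ realizedOffsets N y := by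
  obtain ⟨s, hs, hsν⟩ := hν
  obtain ⟨t, ht, htμ⟩ := hμ
  obtain ⟨r, hr, hrρ⟩ := hρ
  obtain ⟨F, hF, hFx⟩ := IsSection.exists_mul_inv_mul hN hNcomm hs ht hr
  refine ⟨F, hF, fun i => ?_⟩
  simp only [Pi.mul_apply, Pi.inv_apply, hFx, ← hsν, ← htμ, ← hrρ]
  group

theorem mem_realizedOffsets_of_isComplement' [N.Normal] {y ν : ι → G} (hν : ∀ i, ν i ∈ N)
    (hK : (Subgroup.closure (range (y * ν))).IsComplement' N) : ν ∈ realizedOffsets N y := by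
  obtain ⟨s, hs, hfix⟩ := IsSection.exists_of_isComplement' hK
  refine ⟨s, hs, fun i => ?_⟩
  have h := hfix _ (subset_closure (mem_range_self i))
  rw [Pi.mul_apply, map_mul, hs.map_eq_one _ (hν i), mul_one] at h
  rw [h, inv_mul_cancel_left]

theorem sectionOffsets_injective {y : ι → G} (hy : Subgroup.closure (range y) ⊔ N = ⊤) :
    Function.Injective (sectionOffsets N y) := by
  intro s t hst
  have heq : EqOn s.1 t.1 (range y ∪ N) := by
    rintro _ (⟨i, rfl⟩ | hn)
    · exact mul_left_cancel (congrArg Subtype.val (congrFun hst i))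
    · rw [s.2.map_eq_one _ hn, t.2.map_eq_one _ hn]
  refine Subtype.ext <| MonoidHom.eq_of_eqOn_dense ?_ heq
  rw [Subgroup.closure_union, closure_eq, hy]

theorem one_notMem_range_sectionOffsets {y : ι → G} (hy : Subgroup.closure (range y) = ⊤)
    (hN : N ≠ ⊥) :
    1 ∉ range (sectionOffsets N y) := by
  rintro ⟨s, hs⟩
  have hid : s.1 = MonoidHom.id G := MonoidHom.eq_of_eqOn_dense hy <| by
    rintro _ ⟨i, rfl⟩
    exact (inv_mul_eq_one.mp (congrArg Subtype.val (congrFun hs i))).symm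
  exact hN <| (eq_bot_iff_forall N).mpr fun n hn => by
    simpa [hid] using s.2.map_eq_one n hn

instance [Finite G] : Finite {s : G →* G // IsSection N s} :=
  have : Finite (G →* G) := .of_injective _ DFunLike.coe_injective
  inferInstance

theorem card_sections_lt [Finite G] [Finite ι] {y : ι → G} (hy : Subgroup.closure (range y) = ⊤)
    (hN : N ≠ ⊥) : Nat.card {s : G →* G // IsSection N s} < Nat.card (ι → N) := by
  classical
  have := Fintype.ofFinite {s : G →* G // IsSection N s}
  have := Fintype.ofFinite (ι → N)
  simpa only [Nat.card_eq_fintype_card] using Fintype.card_lt_of_injective_of_notMem _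
    (sectionOffsets_injective (y := y) (by rw [hy, top_sup_eq]))
    (one_notMem_range_sectionOffsets hy hN)

theorem card_le_card_sections [Finite G] {y : ι → G}
    (hy : univ.pi (fun _ => (N : Set G)) ⊆ realizedOffsets N y) :
    Nat.card (ι → N) ≤ Nat.card {s : G →* G // IsSection N s} := by
  refine Nat.card_le_card_of_surjective (sectionOffsets N y) fun ν => ?_
  obtain ⟨s, hs, hsν⟩ := hy (fun i _ => (ν i).2 : (fun i => (ν i : G)) ∈ univ.pi _)
  exact ⟨⟨s, hs⟩, funext fun i => Subtype.ext (hsν i)⟩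

theorem pi_subset_realizedOffsets [Finite ι] [DecidableEq ι] (hN : N.Normal)
    (hNcomm : ∀ a ∈ N, ∀ b ∈ N, a * b = b * a) {l : Type*} {e : l → G}
    (he : Subgroup.closure (range e) = N) {y : ι → G} (hone : 1 ∈ realizedOffsets N y)
    (hsingle : ∀ i j, Pi.mulSingle i (e j) ∈ realizedOffsets N y) :
    univ.pi (fun _ => (N : Set G)) ⊆ realizedOffsets N y := by
  let J : Subgroup (ι → G) :=
    { carrier := realizedOffsets N y
      one_mem' := hone
      mul_mem' := fun hν hμ => by
        simpa using mul_inv_mul_mem_realizedOffsets hN hNcomm hν hone hμ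
      inv_mem' := fun hν => by
        simpa using mul_inv_mul_mem_realizedOffsets hN hNcomm hone hν hone }
  have hpi : Subgroup.pi univ (fun _ => N) ≤ J := pi_le_iff.mpr fun i => by
    rw [map_le_iff_le_comap, ← he, closure_le]
    rintro _ ⟨j, rfl⟩
    exact hsingle i j
  exact fun ν hν => hpi hν

theorem Pi.mul_mulSingle_eq_update [DecidableEq ι] (g : ι → G) (i : ι) (c : G) :
    g * Pi.mulSingle i c = Function.update g i (g i * c) := by
  ext k
  rcases eq_or_ne k i with rfl | hk
  · simp
  · simp [hk]

theorem lt_rank_of_forall_closure_ne_top [Finite G] (hN : N.Normal) (hNne : N ≠ ⊥)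
    (hNmin : ∀ M : Subgroup G, M.Normal → M ≤ N → M = ⊥ ∨ M = N)
    (hNcomm : ∀ a ∈ N, ∀ b ∈ N, a * b = b * a) {l : Type*} {e : l → G}
    (he : Subgroup.closure (range e) = N) {d : ℕ} {g : Fin d → G}
    (hgen : Subgroup.closure (range g) ⊔ N = ⊤) (hg : Subgroup.closure (range g) ≠ ⊤)
    (hrep : ∀ i j, Subgroup.closure (range (g * Pi.mulSingle i (e j))) ≠ ⊤) :
    d < Group.rank G := by
  have hej : ∀ j, e j ∈ N := fun j => he ▸ subset_closure (mem_range_self j)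
  have hcompl : ∀ ν : Fin d → G, (∀ i, ν i ∈ N) → Subgroup.closure (range (g * ν)) ≠ ⊤ →
      ν ∈ realizedOffsets N g := fun ν hν hne =>
    mem_realizedOffsets_of_isComplement' hν <|
      (eq_top_or_isComplement'_of_sup_eq_top hN hNmin hNcomm
        (by rw [closure_range_mul_sup hν, hgen])).resolve_left hne
  have hpi := pi_subset_realizedOffsets hN hNcomm he
    (hcompl 1 (fun _ => N.one_mem) (by rwa [mul_one]))
    fun i j => hcompl _ (fun k => by by_cases hk : k = i <;> simp [hk, hej]) (hrep i j)
  refine lt_of_not_ge fun hd => ?_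
  obtain ⟨y, hy⟩ := Group.exists_closure_range_eq_top_of_rank_le hd
  exact (card_le_card_sections hpi).not_gt (card_sections_lt hy hNne)

end

/-- Let `G` be a finite group and let `N = ⟨e 1, …, e l⟩` be an abelian minimal normal
subgroup of `G`. If `G = ⟨g 1, …, g d⟩N` then either (1) `d(G) ≤ d` and either
`G = ⟨g 1, …, g d⟩` or `G = ⟨g 1, …, g (i-1), g i * e j, g (i+1), …, g d⟩` for some `i, j`;
or (2) `d(G) = d + 1` and `G = ⟨g 1, …, g d, x⟩` for every `1 ≠ x ∈ N`. -/
theorem abelian_minimal_normal_generation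
    {G : Type*} [Group G] [Finite G]
    (N : Subgroup G) (hNnormal : N.Normal) (hNne : N ≠ ⊥)
    (hNmin : ∀ M : Subgroup G, M.Normal → M ≤ N → M = ⊥ ∨ M = N)
    (habelian : ∀ a ∈ N, ∀ b ∈ N, a * b = b * a)
    (l : ℕ) (e : Fin l → G) (he : Subgroup.closure (Set.range e) = N)
    (d : ℕ) (g : Fin d → G)
    (hgen : Subgroup.closure (Set.range g) ⊔ N = ⊤) :
    (Group.rank G ≤ d ∧
      (Subgroup.closure (Set.range g) = ⊤ ∨
        ∃ i : Fin d, ∃ j : Fin l,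
          Subgroup.closure (Set.range (Function.update g i (g i * e j))) = ⊤)) ∨
    (Group.rank G = d + 1 ∧
      ∀ x ∈ N, x ≠ 1 → Subgroup.closure (Set.range g ∪ {x}) = ⊤) := by
  classical
  by_cases hg : Subgroup.closure (range g) = ⊤
  · exact .inl ⟨by simpa using Group.rank_le_of_closure_range_eq_top hg, .inl hg⟩
  by_cases hrep : ∃ i j, Subgroup.closure (range (Function.update g i (g i * e j))) = ⊤
  · obtain ⟨i, j, hij⟩ := hrep
    exact .inl ⟨by simpa using Group.rank_le_of_closure_range_eq_top hij, .inr ⟨i, j, hij⟩⟩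
  push Not at hrep
  have hx : ∀ x ∈ N, x ≠ 1 → Subgroup.closure (range g ∪ {x}) = ⊤ := fun x hxN hx1 =>
    eq_top_of_sup_eq_top_of_mem hNnormal hNmin habelian
      (top_unique (hgen ▸ sup_le_sup_right (Subgroup.closure_mono subset_union_left) N))
      (subset_closure (Or.inr rfl)) hxN hx1
  obtain ⟨x, hxN, hx1⟩ := N.bot_or_exists_ne_one.resolve_left hNne
  have hrank_le : Group.rank G ≤ d + 1 := by
    simpa using Group.rank_le_of_closure_range_eq_top (y := Fin.cons x g) <| by
      rw [Fin.range_cons, insert_eq, union_comm]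
      exact hx x hxN hx1
  refine .inr ⟨hrank_le.antisymm (lt_rank_of_forall_closure_ne_top hNnormal hNne hNmin habelian
    he hgen hg fun i j => ?_), hx⟩
  rw [Pi.mul_mulSingle_eq_update]
  exact hrep i j
end

section
/- Let N be an abelian minimal normal subgroup of a finite group G with N ≠ G, and let g_1N, …, g_dN be a minimum generating set of G/N (so d = d(G/N)). Then d(G) ∈ {d, d+1}, and: if d(G) = d, then either (g_1, …, g_d) generates G or there exist an index 1 ≤ i ≤ d and an element e ∈ N, e ≠ 1, such that (g_1, …, g_{i-1}, g_ie, g_{i+1}, …, g_d) generates G; if d(G) = d + 1, then (g_1, …, g_d, n) generates G for every n ∈ N with n ≠ 1. -/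
/-!
A subgroup `K` with `KN = G` has `K ∩ N` normalised by `K` and (as `N` is abelian) centralised by
`N`, so by minimality either `K = G` or `K` is a complement of `N`, i.e. the image of a
homomorphic splitting of `G → G/N`. Hence adjoining any `1 ≠ n ∈ N` to lifts of generators of
`G/N` generates `G`, which gives `d(G) ≤ d + 1`.

A splitting is determined by its values on a generating tuple `q` of `G/N`, so the splittings
inject into the `|N|^d` lifts of `q`; they exhaust them exactly when no lift of `q` generates `G`.
This condition is therefore independent of `q`. If neither `(g_i)` nor any single modification
`(…, g_i e, …)` generates `G`, then, since splittings `σ, s, τ` combine to a splitting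
`σ s⁻¹ τ` when `N` is abelian, no lift of `(g_i N)` generates `G`; so no lift of any generating
`d`-tuple of `G/N` does, contradicting `d(G) = d`.
-/

open Subgroup

section Splittings

variable {G : Type*} [Group G] {N : Subgroup G}

theorem nat_card_lifts {ι : Type*} [Fintype ι] (q : ι → G ⧸ N) :
    Nat.card {y : ι → G // ∀ i, (y i : G ⧸ N) = q i} = Nat.card N ^ Fintype.card ι := by
  rw [Nat.card_congr (Equiv.subtypePiEquivPi (p := fun i (a : G) => (a : G ⧸ N) = q i)),
    Nat.card_pi, Finset.prod_eq_pow_card (b := Nat.card N), Finset.card_univ]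
  intro i _
  have := QuotientGroup.card_preimage_mk N {q i}
  rwa [Nat.card_unique (α := ({q i} : Set (G ⧸ N))), mul_one] at this

variable [N.Normal]

variable (N) in
def splittings : Set (G ⧸ N →* G) := {σ | ∀ x, (σ x : G ⧸ N) = x}

theorem map_mk'_closure_range {ι : Type*} (y : ι → G) :
    (closure (Set.range y)).map (QuotientGroup.mk' N) =
      closure (Set.range fun i => (y i : G ⧸ N)) := by
  rw [MonoidHom.map_closure, ← Set.range_comp]; rfl

theorem exists_mem_splittings_of_inf_eq_bot {K : Subgroup G}
    (hK : K.map (QuotientGroup.mk' N) = ⊤) (hKN : K ⊓ N = ⊥) :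
    ∃ σ ∈ splittings N, ∀ k ∈ K, σ k = k := by
  have hinj : Function.Injective ((QuotientGroup.mk' N).domRestrict K) := by
    rw [← MonoidHom.ker_eq_bot_iff, MonoidHom.ker_domRestrict, QuotientGroup.ker_mk',
      subgroupOf_eq_bot, disjoint_iff, inf_comm, hKN]
  have hsurj : Function.Surjective ((QuotientGroup.mk' N).domRestrict K) := by
    rw [← MonoidHom.range_eq_top, MonoidHom.domRestrict_range, hK]
  let e := MulEquiv.ofBijective _ ⟨hinj, hsurj⟩
  exact ⟨K.subtype.comp e.symm.toMonoidHom, fun x => e.apply_symm_apply x,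
    fun k hk => congrArg Subtype.val (e.symm_apply_apply ⟨k, hk⟩)⟩

theorem closure_range_apply_ne_top_of_mem_splittings (hN : N ≠ ⊥) {σ : G ⧸ N →* G}
    (hσ : σ ∈ splittings N) {ι : Type*} (q : ι → G ⧸ N) :
    closure (Set.range fun i => σ (q i)) ≠ ⊤ := by
  obtain ⟨n, hnN, hn1⟩ := N.bot_or_exists_ne_one.resolve_left hN
  have hrange : σ.range ≠ ⊤ := fun htop => hn1 <| by
    obtain ⟨x, rfl⟩ := htop ▸ mem_top n
    have hx : x = 1 := by rw [← hσ x, QuotientGroup.eq_one_iff]; exact hnN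
    rw [hx, map_one]
  refine ne_top_of_le_ne_top hrange (closure_le _ |>.2 ?_)
  rintro _ ⟨i, rfl⟩
  exact ⟨q i, rfl⟩

theorem exists_mem_splittings_forall_eq_mul_inv_mul (hcomm : N ≤ centralizer N)
    {σ s τ : G ⧸ N →* G} (hσ : σ ∈ splittings N) (hs : s ∈ splittings N) (hτ : τ ∈ splittings N) :
    ∃ ρ ∈ splittings N, ∀ x, ρ x = σ x * (s x)⁻¹ * τ x := by
  have hmul (x y : G ⧸ N) :
      σ (x * y) * (s (x * y))⁻¹ * τ (x * y) = σ x * (s x)⁻¹ * τ x * (σ y * (s y)⁻¹ * τ y) := by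
    have hu : σ y * (s y)⁻¹ ∈ N := by simp [← QuotientGroup.eq_one_iff, hσ y, hs y]
    have hv : (s x)⁻¹ * τ x ∈ N := by simp [← QuotientGroup.eq_one_iff, hs x, hτ x]
    have key : σ y * (s y)⁻¹ * ((s x)⁻¹ * τ x) = (s x)⁻¹ * τ x * (σ y * (s y)⁻¹) :=
      (mem_centralizer_iff.1 (hcomm hu) _ hv).symm
    calc σ (x * y) * (s (x * y))⁻¹ * τ (x * y)
        = σ x * (σ y * (s y)⁻¹ * ((s x)⁻¹ * τ x)) * τ y := by simp only [map_mul]; group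
      _ = σ x * (s x)⁻¹ * τ x * (σ y * (s y)⁻¹ * τ y) := by rw [key]; group
  refine ⟨MonoidHom.mk' (fun x => σ x * (s x)⁻¹ * τ x) hmul, fun x => ?_, fun x => rfl⟩
  show ((σ x * (s x)⁻¹ * τ x : G) : G ⧸ N) = x
  simp [hσ x, hs x, hτ x]

theorem eq_top_or_inf_eq_bot_of_map_mk'_eq_top
    (hmin : ∀ M : Subgroup G, M.Normal → M ≤ N → M = ⊥ ∨ M = N)
    (hcomm : N ≤ centralizer N) {K : Subgroup G}
    (hK : K.map (QuotientGroup.mk' N) = ⊤) : K = ⊤ ∨ K ⊓ N = ⊥ := by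
  have hsup : K ⊔ N = ⊤ := by
    rw [← QuotientGroup.ker_mk' N, ← comap_map_eq, hK, comap_top]
  have : (K ⊓ N).Normal := by
    rw [← normalizer_eq_top_iff, eq_top_iff, ← hsup]
    refine sup_le ((le_inf le_normalizer le_normalizer_of_normal).trans
      inf_normalizer_le_normalizer_inf) ?_
    exact hcomm.trans ((centralizer_le inf_le_right).trans (centralizer_le_normalizer _))
  refine (hmin _ this inf_le_right).symm.imp (fun hNK => ?_) id
  have hker : (QuotientGroup.mk' N).ker ≤ K := by
    rw [QuotientGroup.ker_mk', ← hNK]; exact inf_le_left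
  rw [← comap_map_eq_self hker, hK, comap_top]

theorem exists_mem_splittings_apply_eq_of_closure_ne_top
    (hmin : ∀ M : Subgroup G, M.Normal → M ≤ N → M = ⊥ ∨ M = N)
    (hcomm : N ≤ centralizer N) {ι : Type*} {y : ι → G}
    (hy : closure (Set.range fun i => (y i : G ⧸ N)) = ⊤) (hne : closure (Set.range y) ≠ ⊤) :
    ∃ σ ∈ splittings N, ∀ i, σ (y i) = y i := by
  have hmap : (closure (Set.range y)).map (QuotientGroup.mk' N) = ⊤ := by
    rw [map_mk'_closure_range, hy]
  obtain ⟨σ, hσ, hσK⟩ := exists_mem_splittings_of_inf_eq_bot hmap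
    ((eq_top_or_inf_eq_bot_of_map_mk'_eq_top hmin hcomm hmap).resolve_left hne)
  exact ⟨σ, hσ, fun i => hσK _ (subset_closure ⟨i, rfl⟩)⟩

theorem closure_range_union_singleton_eq_top
    (hmin : ∀ M : Subgroup G, M.Normal → M ≤ N → M = ⊥ ∨ M = N)
    (hcomm : N ≤ centralizer N) {ι : Type*} {g : ι → G}
    (hg : closure (Set.range fun i => (g i : G ⧸ N)) = ⊤) {n : G} (hn : n ∈ N) (hn1 : n ≠ 1) :
    closure (Set.range g ∪ {n}) = ⊤ := by
  set K := closure (Set.range g ∪ {n})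
  have hmap : K.map (QuotientGroup.mk' N) = ⊤ := by
    rw [eq_top_iff, ← hg, ← map_mk'_closure_range]
    exact map_mono (closure_mono Set.subset_union_left)
  refine (eq_top_or_inf_eq_bot_of_map_mk'_eq_top hmin hcomm hmap).resolve_right fun hKN => hn1 ?_
  have hnKN : n ∈ K ⊓ N := ⟨subset_closure (Or.inr rfl), hn⟩
  rwa [hKN, mem_bot] at hnKN

theorem closure_range_ne_top_of_forall_update_ne_top
    (hmin : ∀ M : Subgroup G, M.Normal → M ≤ N → M = ⊥ ∨ M = N)
    (hcomm : N ≤ centralizer N) (hN : N ≠ ⊥) {ι : Type*} [Finite ι]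
    [DecidableEq ι] {g : ι → G} (hgen : closure (Set.range fun i => (g i : G ⧸ N)) = ⊤)
    (hg : closure (Set.range g) ≠ ⊤)
    (hupd : ∀ i, ∀ e ∈ N, e ≠ 1 → closure (Set.range (Function.update g i (g i * e))) ≠ ⊤)
    (y : ι → G) (hy : ∀ i, (y i : G ⧸ N) = g i) : closure (Set.range y) ≠ ⊤ := by
  obtain ⟨s, hs, hsg⟩ := exists_mem_splittings_apply_eq_of_closure_ne_top hmin hcomm hgen hg
  -- The modifications of `g` by `N`-valued tuples that still lie in a complement of `N` form a
  -- submonoid: `N` is abelian, so splittings can be combined as `σ * s⁻¹ * τ`.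
  let D : Submonoid (ι → G) :=
    { carrier := {e | ∃ σ ∈ splittings N, ∀ i, σ (g i) = g i * e i}
      one_mem' := ⟨s, hs, fun i => by simp [hsg]⟩
      mul_mem' := by
        rintro e e' ⟨σ, hσ, hσe⟩ ⟨τ, hτ, hτe⟩
        obtain ⟨ρ, hρ, hρe⟩ := exists_mem_splittings_forall_eq_mul_inv_mul hcomm hσ hs hτ
        exact ⟨ρ, hρ, fun i => by simp [hρe, hσe, hτe, hsg, mul_assoc]⟩ }
  have hD : ∀ e : ι → G, (∀ i, e i ∈ N) → closure (Set.range (g * e)) ≠ ⊤ → e ∈ D := by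
    intro e he hne
    have hge : ∀ i, ((g * e) i : G ⧸ N) = g i := fun i => QuotientGroup.mk_mul_of_mem _ (he i)
    obtain ⟨σ, hσ, hσe⟩ := exists_mem_splittings_apply_eq_of_closure_ne_top hmin hcomm
      (by simpa only [hge] using hgen) hne
    exact ⟨σ, hσ, fun i => by rw [← hge i]; exact hσe i⟩
  have hsingle : ∀ i, ∀ e ∈ N, Pi.mulSingle i e ∈ D := by
    intro i e he
    rcases eq_or_ne e 1 with rfl | he1
    · rw [Pi.mulSingle_one]; exact D.one_mem
    refine hD _ (fun j => ?_) ?_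
    · rcases eq_or_ne j i with rfl | hj
      · simpa using he
      · simp [hj]
    · convert hupd i e he he1 using 3
      ext j
      rcases eq_or_ne j i with rfl | hj <;> simp [*]
  have hyD : g⁻¹ * y ∈ D := Submonoid.pi_mem_of_mulSingle_mem _ fun i =>
    hsingle i _ (QuotientGroup.eq.1 (hy i).symm)
  obtain ⟨σ, hσ, hσy⟩ := hyD
  simp only [Pi.mul_apply, Pi.inv_apply, mul_inv_cancel_left] at hσy
  rw [show y = fun i => σ (g i) from funext fun i => (hσy i).symm]
  exact closure_range_apply_ne_top_of_mem_splittings hN hσ _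

/-- The right-hand side does not depend on `q`. -/
theorem forall_closure_range_ne_top_iff
    (hmin : ∀ M : Subgroup G, M.Normal → M ≤ N → M = ⊥ ∨ M = N)
    (hcomm : N ≤ centralizer N) [Finite G] (hN : N ≠ ⊥) {ι : Type*} [Fintype ι]
    {q : ι → G ⧸ N} (hq : closure (Set.range q) = ⊤) :
    (∀ y : ι → G, (∀ i, (y i : G ⧸ N) = q i) → closure (Set.range y) ≠ ⊤) ↔
      Nat.card (splittings N) = Nat.card N ^ Fintype.card ι := by
  let f : splittings N → {y : ι → G // ∀ i, (y i : G ⧸ N) = q i} :=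
    fun σ => ⟨fun i => σ.1 (q i), fun i => σ.2 (q i)⟩
  have hf : Function.Injective f := fun σ τ h => Subtype.ext <| MonoidHom.eq_of_eqOn_dense hq <| by
    rintro _ ⟨i, rfl⟩
    exact congrFun (congrArg Subtype.val h) i
  rw [← nat_card_lifts q]
  constructor
  · refine fun hlifts => Nat.card_eq_of_bijective f ⟨hf, fun ⟨y, hy⟩ => ?_⟩
    obtain ⟨σ, hσ, hσy⟩ := exists_mem_splittings_apply_eq_of_closure_ne_top hmin hcomm
      (by simpa only [hy] using hq) (hlifts y hy)
    exact ⟨⟨σ, hσ⟩, Subtype.ext <| funext fun i => by simpa only [hy] using hσy i⟩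
  · intro hcard y hy
    obtain ⟨σ, hσy⟩ := (hf.bijective_of_nat_card_le hcard.ge).2 ⟨y, hy⟩
    rw [show y = fun i => σ.1 (q i) from congrArg Subtype.val hσy.symm]
    exact closure_range_apply_ne_top_of_mem_splittings hN σ.2 q

end Splittings

theorem Group.rank_le_of_closure_range_eq_top_s6 {G : Type*} [Group G] [Group.FG G] {ι : Type*}
    [Fintype ι] {f : ι → G} (hf : closure (Set.range f) = ⊤) : Group.rank G ≤ Fintype.card ι := by
  classical
  calc Group.rank G ≤ (Finset.univ.image f).card := Group.rank_le (by simpa using hf)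
    _ ≤ Fintype.card ι := Finset.card_image_le

theorem Group.exists_closure_range_eq_top (G : Type*) [Group G] [Group.FG G] :
    ∃ x : Fin (Group.rank G) → G, closure (Set.range x) = ⊤ := by
  obtain ⟨S, hS, hclosure⟩ := Group.rank_spec G
  refine ⟨(↑) ∘ (S.equivFinOfCardEq hS).symm, ?_⟩
  rwa [Set.range_comp, Equiv.range_eq_univ, Set.image_univ, Subtype.range_coe]

theorem abelian_minimal_normal_min_generating_general
    {G : Type*} [Group G] [Finite G]
    (N : Subgroup G) (hNnormal : N.Normal) (hNne : N ≠ ⊥)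
    (hNmin : ∀ M : Subgroup G, M.Normal → M ≤ N → M = ⊥ ∨ M = N)
    (habelian : ∀ a ∈ N, ∀ b ∈ N, a * b = b * a)
    (d : ℕ) (g : Fin d → G)
    (hd : d = Group.rank (G ⧸ N))
    (hgen : Subgroup.closure
      (Set.range fun i => ((g i : G) : G ⧸ N)) = ⊤) :
    (Group.rank G = d ∨ Group.rank G = d + 1) ∧
    (Group.rank G = d →
      Subgroup.closure (Set.range g) = ⊤ ∨
        ∃ i : Fin d, ∃ e ∈ N, e ≠ 1 ∧
          Subgroup.closure (Set.range (Function.update g i (g i * e))) = ⊤) ∧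
    (Group.rank G = d + 1 →
      ∀ n ∈ N, n ≠ 1 → Subgroup.closure (Set.range g ∪ {n}) = ⊤) := by
  have hcomm : N ≤ centralizer N := fun b hb a ha => habelian a ha b hb
  have hadjoin : ∀ n ∈ N, n ≠ 1 → closure (Set.range g ∪ {n}) = ⊤ :=
    fun _ => closure_range_union_singleton_eq_top hNmin hcomm hgen
  obtain ⟨n, hnN, hn1⟩ := N.bot_or_exists_ne_one.resolve_left hNne
  have hlower : d ≤ Group.rank G :=
    hd ▸ Group.rank_le_of_surjective _ (QuotientGroup.mk'_surjective N)
  have hupper : Group.rank G ≤ d + 1 := by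
    simpa using Group.rank_le_of_closure_range_eq_top_s6 (f := Fin.cons n g)
      (by rw [Fin.range_cons, ← Set.union_singleton]; exact hadjoin n hnN hn1)
  refine ⟨by omega, fun hrank => ?_, fun _ => hadjoin⟩
  by_contra! ⟨hg, hupd⟩
  obtain ⟨x, hx⟩ := hrank ▸ Group.exists_closure_range_eq_top G
  have hxq : closure (Set.range fun i => (x i : G ⧸ N)) = ⊤ := by
    rw [← map_mk'_closure_range, hx, ← MonoidHom.range_eq_map, QuotientGroup.range_mk']
  have hcard := (forall_closure_range_ne_top_iff hNmin hcomm hNne hgen).1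
    (closure_range_ne_top_of_forall_update_ne_top hNmin hcomm hNne hgen hg hupd)
  exact (forall_closure_range_ne_top_iff hNmin hcomm hNne hxq).2 hcard x (fun _ => rfl) hx

/-- Let `N ≠ G` be an abelian minimal normal subgroup of a finite group `G` and let
`g 1 N, …, g d N` be a minimum generating set of `G/N` (so `d = d(G/N)`). Then
`d(G) ∈ {d, d+1}`; if `d(G) = d` then either `(g 1, …, g d)` generates `G` or some
`(g 1, …, g i * e, …, g d)` with `1 ≠ e ∈ N` generates `G`; and if `d(G) = d + 1` then
`(g 1, …, g d, n)` generates `G` for every `1 ≠ n ∈ N`. -/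
theorem abelian_minimal_normal_min_generating
    {G : Type*} [Group G] [Finite G]
    (N : Subgroup G) (hNnormal : N.Normal) (hNne : N ≠ ⊥) (hNtop : N ≠ ⊤)
    (hNmin : ∀ M : Subgroup G, M.Normal → M ≤ N → M = ⊥ ∨ M = N)
    (habelian : ∀ a ∈ N, ∀ b ∈ N, a * b = b * a)
    (d : ℕ) (g : Fin d → G)
    (hd : d = Group.rank (G ⧸ N))
    (hgen : Subgroup.closure
      (Set.range fun i => ((g i : G) : G ⧸ N)) = ⊤) :
    (Group.rank G = d ∨ Group.rank G = d + 1) ∧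
    (Group.rank G = d →
      Subgroup.closure (Set.range g) = ⊤ ∨
        ∃ i : Fin d, ∃ e ∈ N, e ≠ 1 ∧
          Subgroup.closure (Set.range (Function.update g i (g i * e))) = ⊤) ∧
    (Group.rank G = d + 1 →
      ∀ n ∈ N, n ≠ 1 → Subgroup.closure (Set.range g ∪ {n}) = ⊤) :=
  abelian_minimal_normal_min_generating_general N hNnormal hNne hNmin habelian d g hd hgen
end

section
/- Let G be a permutation group of degree n, i.e. a subgroup of the symmetric group on a set Ω with |Ω| = n, and suppose G has exactly s orbits on Ω. Then every chief series of G has length at most n − s. -/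
/-!
The bound holds more generally: if `c 0 ≤ … ≤ c u` are normal subgroups of a group `H` acting on a finite
set `Ω`, and every element of `c u` acting trivially lies in `c 0`, then the number of strict
steps plus the number of orbits of `c u` is at most `|Ω|`. The proof is by induction on `|Ω|` plus
the number of strict steps. Let `N` be the top of the first strict step; it moves a point `ω`.
The `N`-orbits are blocks for `H`; let `K` be the kernel of the action on them. By Dedekind's law
every strict step of `c` stays strict in `c ⊓ K` or in `c ⊔ K`, and `c ⊔ K` acts on the blocks,
which are fewer than the points. If some step is lost in `c ⊓ K`, the induction applies to it,
and its orbits refine the blocks. Otherwise restrict to the stabilizer `H_ω` acting on `Ω \ {ω}`: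
the Frattini argument `E = N (E ⊓ H_ω)` for `N ≤ E ≤ K` shows that at most the first step is lost.
-/

open MulAction
open scoped Pointwise

namespace ChiefLength

section Jumps

variable {α β : Type*} {u : ℕ}

def jumps [Preorder α] (c : Fin (u + 1) → α) : Set (Fin u) :=
  {i | c i.castSucc < c i.succ}

lemma jumps_comp_subset [PartialOrder α] [Preorder β] {c : Fin (u + 1) → α} (hc : Monotone c)
    (f : α → β) : jumps (f ∘ c) ⊆ jumps c := fun i hi =>
  (hc i.castSucc_le_succ).lt_of_ne fun h => hi.ne (congrArg f h)

end Jumps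

variable {H : Type*} [Group H]

lemma eq_of_le_of_inf_le_of_sup_le_of_normal {A B K : Subgroup H} [K.Normal] (hAB : A ≤ B)
    (hinf : B ⊓ K ≤ A ⊓ K) (hsup : B ⊔ K ≤ A ⊔ K) : A = B := by
  refine hAB.antisymm fun b hb => ?_
  obtain ⟨a, ha, k, hk, rfl⟩ : b ∈ (A : Set H) * (K : Set H) := by
    rw [← Subgroup.mul_normal]; exact hsup (Subgroup.mem_sup_left hb)
  have hkB : k ∈ B := by simpa using B.mul_mem (B.inv_mem (hAB ha)) hb
  exact A.mul_mem ha (hinf ⟨hkB, hk⟩).1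

lemma jumps_subset_union_inf_sup {u : ℕ} {c : Fin (u + 1) → Subgroup H} (hc : Monotone c)
    (K : Subgroup H) [K.Normal] :
    jumps c ⊆ jumps (fun i => c i ⊓ K) ∪ jumps (fun i => c i ⊔ K) := by
  intro i hi
  by_contra h
  simp only [jumps, Set.mem_union, Set.mem_ofPred_eq, not_or] at h
  have hle := hc i.castSucc_le_succ
  refine hi.ne (eq_of_le_of_inf_le_of_sup_le_of_normal (K := K) hle ?_ ?_)
  · exact ((inf_le_inf_right K hle).lt_or_eq.resolve_left h.1).ge
  · exact ((sup_le_sup_right hle K).lt_or_eq.resolve_left h.2).ge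

section Orbits

variable {G α β : Type*} [Group G] [MulAction G α] [Finite α]

lemma card_le_card_orbitRel_quotient {f : α → β} (hf : Function.Surjective f)
    (hinv : ∀ (g : G) a, f (g • a) = f a) : Nat.card β ≤ Nat.card (orbitRel.Quotient G α) := by
  refine Nat.card_le_card_of_surjective
    (Quotient.lift f fun a b hab => ?_) fun y => ?_
  · obtain ⟨g, rfl⟩ := hab
    exact hinv g b
  · obtain ⟨a, rfl⟩ := hf y
    exact ⟨Quotient.mk _ a, rfl⟩

lemma card_orbitRel_quotient_le_of_le {A B : Subgroup G} (h : A ≤ B) :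
    Nat.card (orbitRel.Quotient B α) ≤ Nat.card (orbitRel.Quotient A α) :=
  card_le_card_orbitRel_quotient Quotient.mk_surjective fun g x =>
    Quotient.sound (mem_orbit x (⟨g, h g.2⟩ : B))

lemma card_orbitRel_quotient_lt {g : G} {a : α} (h : g • a ≠ a) :
    Nat.card (orbitRel.Quotient G α) < Nat.card α :=
  (Nat.card_le_card_of_surjective _ Quotient.mk_surjective).lt_of_ne fun heq =>
    h ((Quotient.mk_surjective.bijective_of_nat_card_le heq.ge).1 (Quotient.sound (mem_orbit a g)))

end Orbits

section Blocks

variable {Ω : Type*} [MulAction H Ω]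

lemma orbitRel_subgroup_iff {A : Subgroup H} {x y : Ω} :
    orbitRel A Ω x y ↔ ∃ g ∈ A, g • y = x := by
  simp [orbitRel_apply, mem_orbit_iff, Subgroup.smul_def]

instance (N : Subgroup H) [hN : N.Normal] : MulAction H (orbitRel.Quotient N Ω) where
  smul g := Quotient.map (g • ·) fun x y hxy => by
    obtain ⟨n, hn, rfl⟩ := orbitRel_subgroup_iff.1 hxy
    exact orbitRel_subgroup_iff.2 ⟨g * n * g⁻¹, hN.conj_mem n hn g, by simp [mul_smul]⟩
  one_smul := Quotient.ind fun x => congrArg (Quotient.mk _) (one_smul H x)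
  mul_smul g h := Quotient.ind fun x => congrArg (Quotient.mk _) (mul_smul g h x)

end Blocks

def blockKernel (N : Subgroup H) [N.Normal] (Ω : Type*) [MulAction H Ω] : Subgroup H :=
  (toPermHom H (orbitRel.Quotient N Ω)).ker

section BlockKernel

variable {Ω : Type*} [MulAction H Ω] (N : Subgroup H) [N.Normal]

instance : (blockKernel N Ω).Normal := MonoidHom.normal_ker _

variable {N} in
lemma mem_blockKernel {g : H} :
    g ∈ blockKernel N Ω ↔ ∀ q : orbitRel.Quotient N Ω, g • q = q := by
  simp [blockKernel, Equiv.ext_iff]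

lemma le_blockKernel : N ≤ blockKernel N Ω := fun n hn =>
  mem_blockKernel.2 <| Quotient.ind fun x => Quotient.sound (mem_orbit x (⟨n, hn⟩ : N))

variable {N}

lemma exists_smul_eq_of_mem_blockKernel {g : H} (hg : g ∈ blockKernel N Ω) (x : Ω) :
    ∃ n ∈ N, n • x = g • x :=
  orbitRel_subgroup_iff.1 (Quotient.exact (mem_blockKernel.1 hg (Quotient.mk _ x)))

lemma card_orbitRel_quotient_le_of_le_blockKernel [Finite Ω] {B : Subgroup H}
    (hB : B ≤ blockKernel N Ω) :
    Nat.card (orbitRel.Quotient N Ω) ≤ Nat.card (orbitRel.Quotient B Ω) :=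
  card_le_card_orbitRel_quotient Quotient.mk_surjective fun g x =>
    mem_blockKernel.1 (hB g.2) (Quotient.mk _ x)

lemma card_orbitRel_quotient_le_ofStabilizer [Finite Ω] {ω : Ω} (hω : ∃ n ∈ N, n • ω ≠ ω)
    {B : Subgroup (stabilizer H ω)} (hB : ∀ g ∈ B, (g : H) ∈ blockKernel N Ω) :
    Nat.card (orbitRel.Quotient N Ω) ≤
      Nat.card (orbitRel.Quotient B (SubMulAction.ofStabilizer H ω)) := by
  refine card_le_card_orbitRel_quotient (f := fun x => Quotient.mk (orbitRel N Ω) x.1)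
    (Quotient.ind fun x => ?_) fun g x => mem_blockKernel.1 (hB g g.2) (Quotient.mk _ x.1)
  by_cases hx : x = ω
  · obtain ⟨n, hn, hnω⟩ := hω
    rw [hx]
    exact ⟨⟨n • ω, hnω⟩, Quotient.sound (mem_orbit ω (⟨n, hn⟩ : N))⟩
  · exact ⟨⟨x, hx⟩, rfl⟩

lemma card_orbitRel_quotient_le_sup_blockKernel [Finite Ω] {A : Subgroup H} (hNA : N ≤ A) :
    Nat.card (orbitRel.Quotient A Ω) ≤
      Nat.card (orbitRel.Quotient (A ⊔ blockKernel N Ω : Subgroup H) (orbitRel.Quotient N Ω)) := by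
  refine card_le_card_orbitRel_quotient (f := Quotient.lift (Quotient.mk (orbitRel A Ω))
    fun x y hxy => Quotient.sound ?_) (Quotient.ind fun x => ⟨Quotient.mk _ x, rfl⟩) ?_
  · obtain ⟨n, hn, rfl⟩ := orbitRel_subgroup_iff.1 hxy
    exact mem_orbit y (⟨n, hNA hn⟩ : A)
  · rintro ⟨g, hg⟩
    refine Quotient.ind fun x => Quotient.sound ?_
    obtain ⟨a, ha, k, hk, rfl⟩ : g ∈ (A : Set H) * (blockKernel N Ω : Set H) := by
      rwa [← Subgroup.mul_normal]
    obtain ⟨n, hn, hnx⟩ := exists_smul_eq_of_mem_blockKernel hk x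
    exact orbitRel_subgroup_iff.2 ⟨a * n, A.mul_mem ha (hNA hn), by simp [mul_smul, hnx]⟩

lemma le_sup_inf_stabilizer {E : Subgroup H} (hNE : N ≤ E) (hEK : E ≤ blockKernel N Ω)
    (ω : Ω) : E ≤ N ⊔ (E ⊓ stabilizer H ω) := by
  intro g hg
  obtain ⟨n, hn, hnω⟩ := exists_smul_eq_of_mem_blockKernel (hEK hg) ω
  have hstab : n⁻¹ * g ∈ E ⊓ stabilizer H ω :=
    ⟨E.mul_mem (E.inv_mem (hNE hn)) hg, by simp [mem_stabilizer_iff, mul_smul, ← hnω]⟩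
  simpa using Subgroup.mul_mem_sup hn hstab

lemma subgroupOf_stabilizer_lt {E₁ E₂ : Subgroup H} (hNE : N ≤ E₁) (hlt : E₁ < E₂)
    (hEK : E₂ ≤ blockKernel N Ω) (ω : Ω) :
    E₁.subgroupOf (stabilizer H ω) < E₂.subgroupOf (stabilizer H ω) := by
  refine (Subgroup.subgroupOf_mono _ hlt.le).lt_of_ne fun heq => hlt.not_ge ?_
  rw [Subgroup.subgroupOf_inj] at heq
  calc E₂ ≤ N ⊔ (E₂ ⊓ stabilizer H ω) := le_sup_inf_stabilizer (hNE.trans hlt.le) hEK ω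
    _ ≤ E₁ := sup_le hNE (heq ▸ inf_le_left)

end BlockKernel

lemma smul_eq_self_of_forall_ofStabilizer {Ω : Type*} [MulAction H Ω] {ω : Ω}
    {g : stabilizer H ω} (h : ∀ x : SubMulAction.ofStabilizer H ω, g • x = x) (y : Ω) :
    (g : H) • y = y := by
  by_cases hy : y = ω
  · exact hy ▸ g.2
  · exact congrArg Subtype.val (h ⟨y, hy⟩)

lemma ncard_jumps_le_ncard_jumps_stabilizer_add_one {Ω : Type*} [MulAction H Ω] {u : ℕ}
    {c : Fin (u + 1) → Subgroup H} (hc : Monotone c) {i₀ : Fin u} (hi₀ : i₀ ∈ jumps c)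
    (hmin : ∀ i ∈ jumps c, i₀ ≤ i) [(c i₀.succ).Normal]
    (hinf : jumps c ⊆ jumps fun i => c i ⊓ blockKernel (c i₀.succ) Ω) (ω : Ω) :
    (jumps c).ncard ≤
      (jumps fun i => (c i ⊓ blockKernel (c i₀.succ) Ω).subgroupOf (stabilizer H ω)).ncard + 1 := by
  have hsub : jumps c \ {i₀} ⊆
      jumps fun i => (c i ⊓ blockKernel (c i₀.succ) Ω).subgroupOf (stabilizer H ω) := by
    rintro i ⟨hi, hne⟩
    have hlt : i₀ < i := (hmin i hi).lt_of_ne (Ne.symm hne)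
    exact subgroupOf_stabilizer_lt
      (le_inf (hc (Fin.succ_le_castSucc_iff.2 hlt)) (le_blockKernel _)) (hinf hi) inf_le_right ω
  rw [← Set.ncard_sdiff_singleton_add_one hi₀]
  exact Nat.add_le_add_right (Set.ncard_le_ncard hsub) 1

structure IsNormalChain (Ω : Type*) [MulAction H Ω] {u : ℕ} (c : Fin (u + 1) → Subgroup H) :
    Prop where
  mono : Monotone c
  normal : ∀ i, (c i).Normal
  fixing_mem : ∀ g ∈ c (Fin.last u), (∀ x : Ω, g • x = x) → g ∈ c 0

namespace IsNormalChain

variable {Ω : Type*} [MulAction H Ω] {u : ℕ} {c : Fin (u + 1) → Subgroup H}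

lemma exists_smul_ne (hc : IsNormalChain Ω c) {i : Fin u} (hi : i ∈ jumps c) :
    ∃ n ∈ c i.succ, ∃ ω : Ω, n • ω ≠ ω := by
  by_contra! h
  exact (show c i.castSucc < c i.succ from hi).not_ge fun n hn =>
    hc.mono (Fin.zero_le i.castSucc) (hc.fixing_mem n (hc.mono (Fin.le_last _) hn) (h n hn))

lemma inf (hc : IsNormalChain Ω c) (K : Subgroup H) [K.Normal] :
    IsNormalChain Ω fun i => c i ⊓ K where
  mono _ _ hij := inf_le_inf_right K (hc.mono hij)
  normal i := have := hc.normal i; inferInstance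
  fixing_mem g hg hfix := ⟨hc.fixing_mem g hg.1 hfix, hg.2⟩

lemma sup_blockKernel (hc : IsNormalChain Ω c) (N : Subgroup H) [N.Normal] :
    IsNormalChain (orbitRel.Quotient N Ω) fun i => c i ⊔ blockKernel N Ω where
  mono _ _ hij := sup_le_sup_right (hc.mono hij) _
  normal i := have := hc.normal i; inferInstance
  fixing_mem _ _ hg := Subgroup.mem_sup_right (mem_blockKernel.2 hg)

lemma subgroupOf_stabilizer (hc : IsNormalChain Ω c) (ω : Ω) :
    IsNormalChain (SubMulAction.ofStabilizer H ω) fun i => (c i).subgroupOf (stabilizer H ω) where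
  mono _ _ hij := Subgroup.subgroupOf_mono _ (hc.mono hij)
  normal i := (hc.normal i).subgroupOf _
  fixing_mem g hg hfix := hc.fixing_mem g hg (smul_eq_self_of_forall_ofStabilizer hfix)

theorem ncard_jumps_add_card_orbitRel_quotient_le [Finite Ω] (hc : IsNormalChain Ω c) :
    (jumps c).ncard + Nat.card (orbitRel.Quotient (c (Fin.last u)) Ω) ≤ Nat.card Ω := by
  induction hm : Nat.card Ω + (jumps c).ncard using Nat.strong_induction_on
    generalizing H Ω u c with
  | _ m ih =>
  subst hm
  rcases (jumps c).eq_empty_or_nonempty with hempty | hne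
  · rw [hempty, Set.ncard_empty, zero_add]
    exact Nat.card_le_card_of_surjective _ Quotient.mk_surjective
  obtain ⟨i₀, hi₀, hmin⟩ := Set.exists_min_image (jumps c) id (Set.toFinite _) hne
  obtain ⟨n₀, hn₀, ω, hω⟩ := hc.exists_smul_ne hi₀
  set N := c i₀.succ
  have := hc.normal i₀.succ
  have hNtop : N ≤ c (Fin.last u) := hc.mono (Fin.le_last _)
  set K := blockKernel N Ω
  have hblocks : Nat.card (orbitRel.Quotient N Ω) < Nat.card Ω :=
    card_orbitRel_quotient_lt (g := (⟨n₀, hn₀⟩ : N)) hω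
  have htop : Nat.card (orbitRel.Quotient (c (Fin.last u)) Ω) ≤
      Nat.card (orbitRel.Quotient N Ω) :=
    card_orbitRel_quotient_le_of_le hNtop
  have hsplit : (jumps c).ncard ≤
      (jumps fun i => c i ⊓ K).ncard + (jumps fun i => c i ⊔ K).ncard :=
    (Set.ncard_le_ncard (jumps_subset_union_inf_sup hc.mono K)).trans (Set.ncard_union_le _ _)
  have hupper : (jumps fun i => c i ⊔ K).ncard +
      Nat.card (orbitRel.Quotient (c (Fin.last u) ⊔ K : Subgroup H) (orbitRel.Quotient N Ω)) ≤
        Nat.card (orbitRel.Quotient N Ω) := by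
    have hsub : (jumps fun i => c i ⊔ K).ncard ≤ (jumps c).ncard :=
      Set.ncard_le_ncard (jumps_comp_subset hc.mono (· ⊔ K))
    exact ih _ (by omega) (hc.sup_blockKernel N) rfl
  have hupper_orbits : Nat.card (orbitRel.Quotient (c (Fin.last u)) Ω) ≤
      Nat.card (orbitRel.Quotient (c (Fin.last u) ⊔ K : Subgroup H) (orbitRel.Quotient N Ω)) :=
    card_orbitRel_quotient_le_sup_blockKernel hNtop
  by_cases hinf : jumps c ⊆ jumps fun i => c i ⊓ K
  · set d : Fin (u + 1) → Subgroup (stabilizer H ω) := fun i => (c i ⊓ K).subgroupOf _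
    have hcard := SubMulAction.nat_card_ofStabilizer_add_one_eq H ω
    have hjumps : (jumps c).ncard ≤ (jumps d).ncard + 1 :=
      ncard_jumps_le_ncard_jumps_stabilizer_add_one hc.mono hi₀ hmin hinf ω
    have hsub : (jumps d).ncard ≤ (jumps c).ncard :=
      Set.ncard_le_ncard (jumps_comp_subset hc.mono fun A => (A ⊓ K).subgroupOf _)
    have hstab : (jumps d).ncard +
        Nat.card (orbitRel.Quotient (d (Fin.last u)) (SubMulAction.ofStabilizer H ω)) ≤
          Nat.card (SubMulAction.ofStabilizer H ω) :=
      ih _ (by omega) ((hc.inf K).subgroupOf_stabilizer ω) rfl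
    have hstab_orbits : Nat.card (orbitRel.Quotient N Ω) ≤
        Nat.card (orbitRel.Quotient (d (Fin.last u)) (SubMulAction.ofStabilizer H ω)) :=
      card_orbitRel_quotient_le_ofStabilizer ⟨n₀, hn₀, hω⟩ fun g hg => hg.2
    omega
  · have hlt : (jumps fun i => c i ⊓ K).ncard < (jumps c).ncard :=
      Set.ncard_lt_ncard ((jumps_comp_subset hc.mono (· ⊓ K)).ssubset_of_not_subset hinf)
    have hlower : (jumps fun i => c i ⊓ K).ncard +
        Nat.card (orbitRel.Quotient (c (Fin.last u) ⊓ K : Subgroup H) Ω) ≤ Nat.card Ω :=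
      ih _ (by omega) (hc.inf K) rfl
    have hlower_orbits : Nat.card (orbitRel.Quotient N Ω) ≤
        Nat.card (orbitRel.Quotient (c (Fin.last u) ⊓ K : Subgroup H) Ω) :=
      card_orbitRel_quotient_le_of_le_blockKernel inf_le_right
    omega

end IsNormalChain

end ChiefLength

open ChiefLength in
theorem chief_series_length_le_of_perm_general
    {Ω : Type*} [Fintype Ω] (G : Subgroup (Equiv.Perm Ω))
    (n : ℕ) (hn : n = Fintype.card Ω)
    (s : ℕ) (hs : s = Nat.card (MulAction.orbitRel.Quotient G Ω))
    -- a chief series `⊥ = c 0 < c 1 < … < c u = ⊤` of `G` of length `u`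
    (u : ℕ) (c : Fin (u + 1) → Subgroup G)
    (hcnormal : ∀ i, (c i).Normal)
    (hclt : ∀ i : Fin u, c i.castSucc < c i.succ) :
    u ≤ n - s := by
  have hc : IsNormalChain Ω c :=
    { mono := (Fin.strictMono_iff_lt_succ.2 hclt).monotone
      normal := hcnormal
      fixing_mem := fun g _ hg =>
        (Subtype.ext (Equiv.ext hg : (g : Equiv.Perm Ω) = 1) : g = 1) ▸ (c 0).one_mem }
  have hjumps : (jumps c).ncard = u := by
    rw [show jumps c = Set.univ from Set.eq_univ_of_forall hclt, Set.ncard_univ, Nat.card_fin]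
  have horbits : s ≤ Nat.card (orbitRel.Quotient (c (Fin.last u)) Ω) :=
    hs ▸ card_le_card_orbitRel_quotient Quotient.mk_surjective fun g x =>
      Quotient.sound (mem_orbit x (g : G))
  have hcard : Nat.card Ω = n := hn ▸ Nat.card_eq_fintype_card
  have hbound := hc.ncard_jumps_add_card_orbitRel_quotient_le
  omega

/-- Let `G` be a permutation group of degree `n` (a subgroup of the symmetric group on a
set `Ω` with `|Ω| = n`) with exactly `s` orbits on `Ω`. Then every chief series of `G`
has length at most `n - s`. -/
theorem chief_series_length_le_of_perm
    {Ω : Type*} [Fintype Ω] (G : Subgroup (Equiv.Perm Ω))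
    (n : ℕ) (hn : n = Fintype.card Ω)
    (s : ℕ) (hs : s = Nat.card (MulAction.orbitRel.Quotient G Ω))
    -- a chief series `⊥ = c 0 < c 1 < … < c u = ⊤` of `G` of length `u`
    (u : ℕ) (c : Fin (u + 1) → Subgroup G)
    (hc0 : c 0 = ⊥) (hctop : c (Fin.last u) = ⊤)
    (hcnormal : ∀ i, (c i).Normal)
    (hclt : ∀ i : Fin u, c i.castSucc < c i.succ)
    (hcchief : ∀ i : Fin u, ∀ M : Subgroup ↥G, M.Normal →
      c i.castSucc ≤ M → M ≤ c i.succ → M = c i.castSucc ∨ M = c i.succ) :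
    u ≤ n - s :=
  chief_series_length_le_of_perm_general G n hn s hs u c hcnormal hclt
end

section
/- Let G be a subgroup of the symmetric group Sym(n) and let H/K be a non-abelian chief factor of G, so that H/K ≅ S^u for some finite non-abelian simple group S and positive integer u. Then 4u ≤ n. -/
set_option linter.unusedVariables false

private lemma comm_of_card_eq_prime {S : Type*} [Group S] {p : ℕ} (hp : p.Prime)
    (h : Nat.card S = p) : ∀ a b : S, a * b = b * a := by
  haveI := Fact.mk hp
  haveI : IsCyclic S := isCyclic_of_prime_card h
  letI := IsCyclic.commGroup (α := S)
  exact fun a b => mul_comm a b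

private lemma exists_prime_pow_dvd (S : Type*) [Group S] [Finite S] [IsSimpleGroup S]
    (hna : ∃ a b : S, a * b ≠ b * a) :
    ∃ q e : ℕ, q.Prime ∧ 4 ≤ (q - 1) * e ∧ q ^ e ∣ Nat.card S := by
  obtain ⟨a, b, hab⟩ := hna
  by_cases h5 : ∃ q : ℕ, q.Prime ∧ 5 ≤ q ∧ q ∣ Nat.card S
  · obtain ⟨q, hq, hq5, hdvd⟩ := h5
    exact ⟨q, 1, hq, by omega, by simpa using hdvd⟩
  by_cases h9 : 3 ^ 2 ∣ Nat.card S
  · exact ⟨3, 2, Nat.prime_three, by norm_num, h9⟩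
  exfalso
  push_neg at h5
  have hcard : Nat.card S ≠ 0 := Nat.card_pos.ne'
  have hsmall : ∀ d : ℕ, d.Prime → d ∣ Nat.card S → d = 2 ∨ d = 3 := by
    intro d hd hdvd
    have h1 := h5 d hd
    have h2 := hd.two_le
    rcases Nat.lt_or_ge d 5 with h | h
    · interval_cases d
      · exact Or.inl rfl
      · exact Or.inr rfl
      · exact absurd hd (by norm_num)
    · exact absurd hdvd (h1 h)
  by_cases h3 : 3 ∣ Nat.card S
  · -- Sylow 2 subgroup has index 3
    haveI := Fact.mk Nat.prime_two
    obtain ⟨P⟩ := (inferInstance : Nonempty (Sylow 2 S))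
    have hQind : (P : Subgroup S).index ≠ 0 := Subgroup.index_ne_zero_of_finite
    have not2 : ¬ (2 ∣ (P : Subgroup S).index) := P.not_dvd_index
    have hidvd : (P : Subgroup S).index ∣ Nat.card S := Subgroup.index_dvd_card (P : Subgroup S)
    have hall : ∀ {d : ℕ}, d.Prime → d ∣ (P : Subgroup S).index → d = 3 := by
      intro d hd hdvd
      rcases hsmall d hd (hdvd.trans hidvd) with h2 | h3'
      · exact absurd (h2 ▸ hdvd) not2
      · exact h3'
    have hk := Nat.eq_prime_pow_of_unique_prime_dvd hQind hall
    obtain ⟨j, hj⟩ := P.2.exists_card_eq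
    have h3k : 3 ∣ (P : Subgroup S).index := by
      have hmul : Nat.card (P : Subgroup S) * (P : Subgroup S).index = Nat.card S :=
        Subgroup.card_mul_index _
      rcases (Nat.prime_three.dvd_mul.mp (hmul ▸ h3)) with h | h
      · rw [hj] at h
        exact absurd (Nat.Prime.dvd_of_dvd_pow Nat.prime_three h) (by norm_num)
      · exact h
    set L := ((P : Subgroup S).index).primeFactorsList.length with hL
    have hQ3 : (P : Subgroup S).index = 3 := by
      rcases Nat.lt_or_ge L 2 with hl | hl
      · interval_cases L
        · rw [hk, pow_zero] at h3k; omega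
        · rw [hk, pow_one]
      · exfalso
        apply h9
        calc (3:ℕ) ^ 2 ∣ 3 ^ L := pow_dvd_pow 3 hl
          _ = (P : Subgroup S).index := hk.symm
          _ ∣ Nat.card S := hidvd
    -- the action on the cosets is faithful
    set Q : Subgroup S := (P : Subgroup S) with hQdef
    let f := MulAction.toPermHom S (S ⧸ Q)
    have hker : f.ker = ⊥ := by
      rcases IsSimpleGroup.eq_bot_or_eq_top_of_normal Q.normalCore inferInstance with h | h
      · rw [← Q.normalCore_eq_ker]; exact h
      · exfalso
        have hQt : Q = ⊤ := le_antisymm le_top (h ▸ Q.normalCore_le)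
        rw [hQt, Subgroup.index_top] at hQ3
        omega
    have hfinj : Function.Injective f := (MonoidHom.ker_eq_bot_iff f).mp hker
    haveI : Fintype (S ⧸ Q) := Fintype.ofFinite _
    haveI : DecidableEq (S ⧸ Q) := Classical.decEq _
    have hcardQuot : Fintype.card (S ⧸ Q) = 3 := by
      rw [← Nat.card_eq_fintype_card]
      exact hQ3
    haveI : Nontrivial (S ⧸ Q) := Fintype.one_lt_card_iff_nontrivial.mp (by omega)
    set ψ := Equiv.Perm.sign.comp f with hψdef
    rcases IsSimpleGroup.eq_bot_or_eq_top_of_normal ψ.ker inferInstance with hψ | hψ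
    · have hinj : Function.Injective ψ := (MonoidHom.ker_eq_bot_iff ψ).mp hψ
      exact hab (hinj (by rw [map_mul, map_mul, mul_comm]))
    · have hmem : ∀ x : S, f x ∈ alternatingGroup (S ⧸ Q) := by
        intro x
        have hx : x ∈ ψ.ker := by rw [hψ]; trivial
        exact Equiv.Perm.mem_alternatingGroup.mpr (MonoidHom.mem_ker.mp hx)
      have hginj : Function.Injective (f.codRestrict (alternatingGroup (S ⧸ Q)) hmem) :=
        fun x y hxy => hfinj (congrArg Subtype.val hxy)
      have hdvd3 : Nat.card S ∣ Nat.card (alternatingGroup (S ⧸ Q)) :=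
        Subgroup.card_dvd_of_injective _ hginj
      have hcA : Nat.card (alternatingGroup (S ⧸ Q)) = 3 := by
        have h2 := two_mul_card_alternatingGroup (α := S ⧸ Q)
        rw [Fintype.card_perm, hcardQuot] at h2
        have h6 : (3:ℕ).factorial = 6 := rfl
        rw [h6] at h2
        rw [Nat.card_eq_fintype_card]
        omega
      rw [hcA] at hdvd3
      rcases (Nat.Prime.eq_one_or_self_of_dvd Nat.prime_three _ hdvd3) with h1 | h1
      · have : (1:ℕ) < Nat.card S := Finite.one_lt_card_iff_nontrivial.mpr inferInstance
        omega
      · exact hab (comm_of_card_eq_prime Nat.prime_three h1 a b)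
  · -- S is a 2-group
    have h2only : ∀ {d : ℕ}, d.Prime → d ∣ Nat.card S → d = 2 := by
      intro d hd hdvd
      rcases hsmall d hd hdvd with h | h
      · exact h
      · exact absurd (h ▸ hdvd) h3
    have hpow := Nat.eq_prime_pow_of_unique_prime_dvd hcard h2only
    haveI := Fact.mk Nat.prime_two
    have hS2 : IsPGroup 2 S := IsPGroup.of_card hpow
    have hcn : Nontrivial (Subgroup.center S) := hS2.center_nontrivial
    rcases IsSimpleGroup.eq_bot_or_eq_top_of_normal (Subgroup.center S) inferInstance with h | h
    · exact absurd (h ▸ hcn) (not_nontrivial _)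
    · have hb : b ∈ Subgroup.center S := h ▸ Subgroup.mem_top b
      exact hab (Subgroup.mem_center_iff.mp hb a)


/-- Let `G ≤ Sym(n)` and let `H/K` be a non-abelian chief factor of `G`, so that
`H/K ≅ S^u` for a finite non-abelian simple group `S` and a positive integer `u`.
Then `4u ≤ n`. -/
theorem nonabelian_chief_factor_power_bound
    {n : ℕ} (G : Subgroup (Equiv.Perm (Fin n)))
    (H K : Subgroup ↥G) [hHnormal : H.Normal] [hKnormal : K.Normal]
    (hKH : K < H)
    (hchief : ∀ M : Subgroup ↥G, M.Normal → K ≤ M → M ≤ H → M = K ∨ M = H)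
    (S : Type*) [Group S] [Finite S] [IsSimpleGroup S]
    (hSnonabelian : ∃ a b : S, a * b ≠ b * a)
    (u : ℕ) (hu : 0 < u)
    (hiso : Nonempty ((H ⧸ K.subgroupOf H) ≃* (Fin u → S))) :
    4 * u ≤ n := by
  have hdvd1 : Nat.card S ^ u ∣ n.factorial := by
    have e1 : Nat.card (H ⧸ K.subgroupOf H) = Nat.card S ^ u := by
      rw [Nat.card_congr hiso.some.toEquiv, Nat.card_fun]
      simp
    calc Nat.card S ^ u = Nat.card (H ⧸ K.subgroupOf H) := e1.symm
      _ ∣ Nat.card H := Subgroup.card_quotient_dvd_card _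
      _ ∣ Nat.card G := Subgroup.card_subgroup_dvd_card _
      _ ∣ Nat.card (Equiv.Perm (Fin n)) := Subgroup.card_subgroup_dvd_card _
      _ = n.factorial := by
          rw [Nat.card_eq_fintype_card, Fintype.card_perm, Fintype.card_fin]
  obtain ⟨q, e, hq, h4, hqe⟩ := exists_prime_pow_dvd S hSnonabelian
  haveI := Fact.mk hq
  have hpow : q ^ (e * u) ∣ n.factorial := by
    rw [pow_mul]
    exact (pow_dvd_pow_of_dvd hqe u).trans hdvd1
  have hle : e * u ≤ (n.factorial).factorization q :=
    (Nat.Prime.pow_dvd_iff_le_factorization hq n.factorial_ne_zero).mp hpow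
  rw [Nat.factorization_def _ hq] at hle
  have hleg : (q - 1) * padicValNat q n.factorial ≤ n := by
    rw [sub_one_mul_padicValNat_factorial]
    exact Nat.sub_le _ _
  calc 4 * u ≤ ((q - 1) * e) * u := Nat.mul_le_mul_right u h4
    _ = (q - 1) * (e * u) := by ring
    _ ≤ (q - 1) * padicValNat q n.factorial := Nat.mul_le_mul_left _ hle
    _ ≤ n := hleg
end
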